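/- arXiv:2307.12391 — 2 statements merged into one kernel-verified Lean document; each statement's English description precedes it below -/
import Mathlib

section
/- Let L be a bounded lattice and let Spc(L) be its set of prime ideals topologized so that the sets supp(a) = {I | a ∉ I}, a ∈ L, form a basis of closed sets. For any topological space X and any closed support datum σ : L → Cl(X) (a map with σ(0) = ∅, σ(1) = X, σ(a ∨ b) = σ(a) ∪ σ(b), σ(a ∧ b) = σ(a) ∩ σ(b)), there exists a unique continuous map f : X → Spc(L) with σ(a) = f⁻¹(supp(a)) for all a ∈ L; moreover f is given by f(x) = {a ∈ L | x ∉ σ(a)}. -/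
/-- `I` is an ideal of the join-semilattice `L`: it contains the bottom element,
is closed under binary joins, and is downward closed. -/
def IsIdeal {L : Type*} [SemilatticeSup L] [OrderBot L] (I : Set L) : Prop :=
  ⊥ ∈ I ∧ (∀ a ∈ I, ∀ b ∈ I, a ⊔ b ∈ I) ∧ ∀ a b : L, a ≤ b → b ∈ I → a ∈ I

/-- `I` is a prime ideal of the bounded lattice `L`: it is a proper ideal such that
`a ⊓ b ∈ I` implies `a ∈ I` or `b ∈ I`. -/
def IsPrimeIdeal {L : Type*} [Lattice L] [BoundedOrder L] (I : Set L) : Prop :=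
  IsIdeal I ∧ I ≠ Set.univ ∧ ∀ a b : L, a ⊓ b ∈ I → a ∈ I ∨ b ∈ I

/-- The set `Spc(L)` of prime ideals of the bounded lattice `L`. -/
def Spc (L : Type*) [Lattice L] [BoundedOrder L] := {I : Set L // IsPrimeIdeal I}

/-- `supp a = {I ∈ Spc(L) | a ∉ I}`. -/
def supp {L : Type*} [Lattice L] [BoundedOrder L] (a : L) : Set (Spc L) :=
  {I : Spc L | a ∉ I.1}

/-- The topology on `Spc(L)` for which the sets `supp a`, `a ∈ L`, form a basis of
closed sets. -/
instance (L : Type*) [Lattice L] [BoundedOrder L] : TopologicalSpace (Spc L) :=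
  TopologicalSpace.generateFrom {U : Set (Spc L) | ∃ a : L, U = (supp a)ᶜ}

/-! A closed support datum `σ : L → Cl(X)` is a bounded lattice homomorphism `φ : L → Set X`,
so the prime ideal `{S | x ∉ S}` of `Set X` pulls back to a prime ideal of `L`; this gives `f`.
Conversely any `f` with `σ a = f ⁻¹' supp a` satisfies `a ∈ f x ↔ x ∉ σ a`, which forces both
the formula and uniqueness. Continuity holds because the preimages of the basic closed sets
`supp a` are the closed sets `σ a`. -/

theorem IsPrimeIdeal.comap {L M : Type*} [Lattice L] [BoundedOrder L] [Lattice M]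
    [BoundedOrder M] {I : Set M} (hI : IsPrimeIdeal I) (φ : BoundedLatticeHom L M) :
    IsPrimeIdeal (φ ⁻¹' I) := by
  obtain ⟨⟨hbot, hsup, hle⟩, hne, hinf⟩ := hI
  refine ⟨⟨?_, fun a ha b hb => ?_, fun a b hab hb => ?_⟩, fun huniv => hne ?_, fun a b hab => ?_⟩
  · simpa only [Set.mem_preimage, map_bot] using hbot
  · simpa only [Set.mem_preimage, map_sup] using hsup _ ha _ hb
  · exact hle _ _ (OrderHomClass.mono φ hab) hb
  · have htop : ⊤ ∈ I := by
      simpa only [Set.mem_preimage, map_top] using Set.eq_univ_iff_forall.1 huniv ⊤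
    exact Set.eq_univ_of_forall fun b => hle b ⊤ le_top htop
  · exact hinf _ _ (by simpa only [Set.mem_preimage, map_inf] using hab)

theorem isPrimeIdeal_setOf_notMem {X : Type*} (x : X) : IsPrimeIdeal {S : Set X | x ∉ S} := by
  refine ⟨⟨Set.notMem_empty x, fun S hS T hT hST => hST.elim hS hT, fun S T hST hT hS => hT (hST hS)⟩,
    ?_, ?_⟩
  · exact fun h => Set.eq_univ_iff_forall.1 h Set.univ (Set.mem_univ x)
  · intro S T hST
    by_contra! h
    exact hST ⟨not_not.1 h.1, not_not.1 h.2⟩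

namespace Spc

variable {L X : Type*} [Lattice L] [BoundedOrder L]

def ofPoint (φ : BoundedLatticeHom L (Set X)) (x : X) : Spc L :=
  ⟨φ ⁻¹' {S | x ∉ S}, (isPrimeIdeal_setOf_notMem x).comap φ⟩

theorem preimage_ofPoint_supp (φ : BoundedLatticeHom L (Set X)) (a : L) :
    ofPoint φ ⁻¹' supp a = φ a := by
  ext x
  exact not_not

theorem continuous_of_isClosed_preimage_supp [TopologicalSpace X] {f : X → Spc L}
    (hf : ∀ a, IsClosed (f ⁻¹' supp a)) : Continuous f := by
  rw [continuous_generateFrom_iff]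
  rintro U ⟨a, rfl⟩
  exact (hf a).isOpen_compl

theorem val_eq_setOf_of_preimage_supp {σ : L → Set X} {f : X → Spc L}
    (hf : ∀ a, σ a = f ⁻¹' supp a) (x : X) : (f x).1 = {a | x ∉ σ a} := by
  ext a
  rw [Set.mem_ofPred_eq, hf a]
  exact not_not.symm

end Spc

theorem stmt8 {L : Type*} [Lattice L] [BoundedOrder L]
    {X : Type*} [TopologicalSpace X] (σ : L → Set X)
    (hclosed : ∀ a : L, IsClosed (σ a)) (hbot : σ ⊥ = ∅) (htop : σ ⊤ = Set.univ)
    (hsup : ∀ a b : L, σ (a ⊔ b) = σ a ∪ σ b)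
    (hinf : ∀ a b : L, σ (a ⊓ b) = σ a ∩ σ b) :
    (∃! f : X → Spc L, Continuous f ∧ ∀ a : L, σ a = f ⁻¹' supp a) ∧
    ∀ f : X → Spc L, (Continuous f ∧ ∀ a : L, σ a = f ⁻¹' supp a) →
      ∀ x : X, (f x).1 = {a : L | x ∉ σ a} := by
  let φ : BoundedLatticeHom L (Set X) :=
    { toFun := σ, map_sup' := hsup, map_inf' := hinf, map_top' := htop, map_bot' := hbot }
  have hφ : ∀ a, σ a = Spc.ofPoint φ ⁻¹' supp a := fun a => (Spc.preimage_ofPoint_supp φ a).symm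
  have hcont : Continuous (Spc.ofPoint φ) :=
    Spc.continuous_of_isClosed_preimage_supp fun a => hφ a ▸ hclosed a
  refine ⟨⟨Spc.ofPoint φ, ⟨hcont, hφ⟩, ?_⟩, fun f hf => Spc.val_eq_setOf_of_preimage_supp hf.2⟩
  rintro g ⟨-, hg⟩
  funext x
  exact Subtype.ext ((Spc.val_eq_setOf_of_preimage_supp hg x).trans
    (Spc.val_eq_setOf_of_preimage_supp hφ x).symm)
end

section
/- Let (T, ⊗) be a tensor triangulated category. The assignment sending a radical thick tensor ideal S ⊆ T to {⟨X⟩ ∈ L(T,⊗) | X ∈ S} is a lattice isomorphism from the lattice of radical thick tensor ideals of T onto the ideal lattice Id(L(T,⊗)). -/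
open CategoryTheory CategoryTheory.Limits CategoryTheory.Pretriangulated
  CategoryTheory.MonoidalCategory

variable (C : Type*) [Category C] [HasZeroObject C] [HasShift C ℤ] [Preadditive C]
  [∀ n : ℤ, (CategoryTheory.shiftFunctor C n).Additive] [Pretriangulated C]
  [HasBinaryBiproducts C] [MonoidalCategory C]
  -- the monoidal structure is exact (triangulated) in each variable:
  [∀ X : C, (tensorLeft X).CommShift ℤ] [∀ X : C, (tensorLeft X).IsTriangulated]
  [∀ X : C, (tensorRight X).CommShift ℤ] [∀ X : C, (tensorRight X).IsTriangulated]

/-- A thick subcategory of the triangulated category `C`, given by its class of objects. -/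
def IsThick (S : Set C) : Prop :=
  (∀ X : C, IsZero X → X ∈ S) ∧
  (∀ X Y : C, (X ≅ Y) → X ∈ S → Y ∈ S) ∧
  (∀ (X : C) (n : ℤ), X ∈ S → (CategoryTheory.shiftFunctor C n).obj X ∈ S) ∧
  (∀ T : Triangle C, T ∈ (distTriang C) → T.obj₁ ∈ S → T.obj₃ ∈ S → T.obj₂ ∈ S) ∧
  (∀ X Y : C, (∃ (i : X ⟶ Y) (r : Y ⟶ X), i ≫ r = 𝟙 X) → Y ∈ S → X ∈ S)

/-- A radical thick tensor ideal of `(C, ⊗)`: a thick subcategory `S` such that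
`X ⊗ Y ∈ S` whenever `X ∈ S` or `Y ∈ S`, and such that `X ⊗ X ∈ S` implies `X ∈ S`. -/
def IsRadThickTensorIdeal (S : Set C) : Prop :=
  IsThick C S ∧
  (∀ X Y : C, X ∈ S ∨ Y ∈ S → (X ⊗ Y) ∈ S) ∧
  (∀ X : C, (X ⊗ X) ∈ S → X ∈ S)

/-- `⟨X⟩`, the radical thick tensor ideal generated by `X`. -/
def rgen (X : C) : Set C := ⋂₀ {S : Set C | IsRadThickTensorIdeal C S ∧ X ∈ S}

variable {C} in
/-- The equivalence relation `X ≈ Y` iff `⟨X⟩ = ⟨Y⟩`. -/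
def rSetoid : Setoid C :=
  ⟨fun X Y => rgen C X = rgen C Y, fun _ => rfl, Eq.symm, Eq.trans⟩

/-- `L(T,⊗) = Ob T / ≈`. -/
def LQ := Quotient (rSetoid (C := C))

variable {C} in
/-- The class `⟨X⟩ ∈ L(T,⊗)` of an object `X`. -/
def cls (X : C) : LQ C := Quotient.mk rSetoid X

/-- Ideals of the lattice `L(T,⊗)` (ordered by `⟨X⟩ ⊆ ⟨Y⟩`, with join
`⟨X ⊞ Y⟩` and bottom the class of zero objects): downward closed subsets
containing the bottom and closed under joins. -/
def IsIdealQ (I : Set (LQ C)) : Prop :=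
  (∀ Z : C, IsZero Z → cls Z ∈ I) ∧
  (∀ X Y : C, rgen C X ⊆ rgen C Y → cls Y ∈ I → cls X ∈ I) ∧
  (∀ X Y : C, cls X ∈ I → cls Y ∈ I → cls (X ⊞ Y) ∈ I)

/-! An ideal `S` is the union of the `⟨X⟩` with `X ∈ S`, so it is recovered from the
classes it contains. Conversely, the objects whose class lies in a lattice ideal `I` form a
radical thick tensor ideal: each closure condition produces an object of some `⟨X⟩` with
`⟨X⟩ ∈ I`, which downward closure then puts in `I`; for a distinguished triangle
`X₁ → X₂ → X₃` one takes `X = X₁ ⊞ X₃`, whose class is the join of those of `X₁` and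
`X₃`. -/

section

variable {D : Type*} [Category D] [HasZeroObject D] [HasShift D ℤ] [Preadditive D]
  [∀ n : ℤ, (shiftFunctor D n).Additive] [Pretriangulated D]

namespace IsThick

variable [HasBinaryBiproducts D] {S : Set D} {X Y : D}

lemma biprod_mem (hS : IsThick D S) (hX : X ∈ S) (hY : Y ∈ S) : (X ⊞ Y) ∈ S :=
  hS.2.2.2.1 _ (binaryBiproductTriangle_distinguished X Y) hX hY

lemma mem_of_biprod_mem_left (hS : IsThick D S) (h : (X ⊞ Y) ∈ S) : X ∈ S :=
  hS.2.2.2.2 X _ ⟨biprod.inl, biprod.fst, biprod.inl_fst⟩ h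

lemma mem_of_biprod_mem_right (hS : IsThick D S) (h : (X ⊞ Y) ∈ S) : Y ∈ S :=
  hS.2.2.2.2 Y _ ⟨biprod.inr, biprod.snd, biprod.inr_snd⟩ h

end IsThick

variable [MonoidalCategory D]

lemma IsRadThickTensorIdeal.sInter {𝒮 : Set (Set D)}
    (h𝒮 : ∀ S ∈ 𝒮, IsRadThickTensorIdeal D S) : IsRadThickTensorIdeal D (⋂₀ 𝒮) :=
  ⟨⟨fun Z hZ S hS => (h𝒮 S hS).1.1 Z hZ,
    fun A B e hA S hS => (h𝒮 S hS).1.2.1 A B e (hA S hS),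
    fun A n hA S hS => (h𝒮 S hS).1.2.2.1 A n (hA S hS),
    fun T hT h₁ h₃ S hS => (h𝒮 S hS).1.2.2.2.1 T hT (h₁ S hS) (h₃ S hS),
    fun A B r hB S hS => (h𝒮 S hS).1.2.2.2.2 A B r (hB S hS)⟩,
    fun A B h S hS => (h𝒮 S hS).2.1 A B (h.imp (· S hS) (· S hS)),
    fun A h S hS => (h𝒮 S hS).2.2 A (h S hS)⟩

lemma isRadThickTensorIdeal_rgen (X : D) : IsRadThickTensorIdeal D (rgen D X) :=
  .sInter fun _ hS => hS.1

lemma mem_rgen_self (X : D) : X ∈ rgen D X := fun _ hS => hS.2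

lemma rgen_subset {S : Set D} (hS : IsRadThickTensorIdeal D S) {X : D} (hX : X ∈ S) :
    rgen D X ⊆ S :=
  fun _ h => h S ⟨hS, hX⟩

lemma rgen_subset_rgen_of_mem {X Y : D} (h : Y ∈ rgen D X) : rgen D Y ⊆ rgen D X :=
  rgen_subset (isRadThickTensorIdeal_rgen X) h

lemma cls_surjective : Function.Surjective (cls : D → LQ D) :=
  Quotient.mk_surjective

lemma cls_mem_image_iff {S : Set D} (hS : IsRadThickTensorIdeal D S) {X : D} :
    cls X ∈ cls '' S ↔ X ∈ S := by
  refine ⟨fun ⟨Y, hY, hYX⟩ => ?_, Set.mem_image_of_mem cls⟩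
  have hgen : rgen D Y = rgen D X := Quotient.exact hYX
  exact rgen_subset hS hY (hgen ▸ mem_rgen_self X)

lemma preimage_cls_image_cls {S : Set D} (hS : IsRadThickTensorIdeal D S) :
    cls ⁻¹' (cls '' S) = S :=
  Set.ext fun _ => cls_mem_image_iff hS

lemma image_cls_subset_image_cls_iff {S₁ S₂ : Set D} (hS₂ : IsRadThickTensorIdeal D S₂) :
    cls '' S₁ ⊆ cls '' S₂ ↔ S₁ ⊆ S₂ :=
  ⟨fun h X hX => (cls_mem_image_iff hS₂).1 (h ⟨X, hX, rfl⟩), Set.image_mono⟩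

variable [HasBinaryBiproducts D]

lemma isIdealQ_image_cls {S : Set D} (hS : IsRadThickTensorIdeal D S) :
    IsIdealQ D (cls '' S) := by
  simp only [IsIdealQ, cls_mem_image_iff hS]
  exact ⟨hS.1.1, fun X _ hXY hY => rgen_subset hS hY (hXY (mem_rgen_self X)),
    fun _ _ => hS.1.biprod_mem⟩

namespace IsIdealQ

variable {I : Set (LQ D)}

lemma cls_mem_of_mem_rgen (hI : IsIdealQ D I) {X Y : D} (hY : cls Y ∈ I) (hX : X ∈ rgen D Y) :
    cls X ∈ I :=
  hI.2.1 X Y (rgen_subset_rgen_of_mem hX) hY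

lemma isRadThickTensorIdeal_preimage_cls (hI : IsIdealQ D I) :
    IsRadThickTensorIdeal D (cls ⁻¹' I) := by
  have hgen := isRadThickTensorIdeal_rgen (D := D)
  refine ⟨⟨hI.1, ?_, ?_, ?_, ?_⟩, ?_, ?_⟩
  · exact fun A B e hA => hI.cls_mem_of_mem_rgen hA ((hgen A).1.2.1 A B e (mem_rgen_self A))
  · exact fun A n hA => hI.cls_mem_of_mem_rgen hA ((hgen A).1.2.2.1 A n (mem_rgen_self A))
  · intro T hT h₁ h₃
    have hsum := mem_rgen_self (T.obj₁ ⊞ T.obj₃)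
    exact hI.cls_mem_of_mem_rgen (hI.2.2 _ _ h₁ h₃) ((hgen _).1.2.2.2.1 T hT
      ((hgen _).1.mem_of_biprod_mem_left hsum) ((hgen _).1.mem_of_biprod_mem_right hsum))
  · exact fun A B r hB => hI.cls_mem_of_mem_rgen hB ((hgen B).1.2.2.2.2 A B r (mem_rgen_self B))
  · rintro A B (hA | hB)
    · exact hI.cls_mem_of_mem_rgen hA ((hgen A).2.1 A B (.inl (mem_rgen_self A)))
    · exact hI.cls_mem_of_mem_rgen hB ((hgen B).2.1 A B (.inr (mem_rgen_self B)))
  · exact fun A h => hI.cls_mem_of_mem_rgen h ((hgen _).2.2 A (mem_rgen_self _))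

end IsIdealQ

end

theorem stmt18 :
    ∃ e : {S : Set C // IsRadThickTensorIdeal C S} ≃o {I : Set (LQ C) // IsIdealQ C I},
      ∀ (S : {S : Set C // IsRadThickTensorIdeal C S}) (X : C),
        cls X ∈ (e S).1 ↔ X ∈ S.1 :=
  ⟨{ toFun S := ⟨cls '' S.1, isIdealQ_image_cls S.2⟩
     invFun I := ⟨cls ⁻¹' I.1, I.2.isRadThickTensorIdeal_preimage_cls⟩
     left_inv S := Subtype.ext (preimage_cls_image_cls S.2)
     right_inv I := Subtype.ext (Set.image_preimage_eq I.1 cls_surjective)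
     map_rel_iff' {_ S₂} := image_cls_subset_image_cls_iff S₂.2 },
   fun S _ => cls_mem_image_iff S.2⟩
end
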